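/- arXiv:2205.12457 — 10 statements merged into one kernel-verified Lean document; each statement's English description precedes it below -/
import Mathlib

section
/- For 0 < α < 1, the supremum of |η_α'(x)| over x in (0, π) equals K₁(α) = max{κ_α, 1/κ_α}, where κ_α = α/(1-α). -/
open Real Set

/-!
Differentiating, `η_α'(x) = -κ / (sin²(x/2) + κ² cos²(x/2))` with `κ = κ_α`. The denominator is a
convex combination of `1` and `κ²`, so `|η_α'| ≤ κ / min 1 κ² = max κ κ⁻¹`. The extended function is
continuous on `[0, π]` and takes the values `κ⁻¹` at `0` and `κ` at `π`, so this bound is the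
supremum over the open interval.
-/

theorem Real.hasDerivAt_cot {x : ℝ} (hx : sin x ≠ 0) : HasDerivAt cot (-1 / sin x ^ 2) x := by
  rw [show (cot : ℝ → ℝ) = fun y => cos y / sin y from funext cot_eq_cos_div_sin]
  refine ((hasDerivAt_cos x).div (hasDerivAt_sin x) hx).congr_deriv ?_
  linear_combination (-1 / sin x ^ 2) * sin_sq_add_cos_sq x

theorem min_one_sq_le_sin_sq_add_sq_mul_cos_sq (κ θ : ℝ) :
    min 1 (κ ^ 2) ≤ sin θ ^ 2 + κ ^ 2 * cos θ ^ 2 := by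
  nlinarith [sin_sq_add_cos_sq θ, min_le_left 1 (κ ^ 2), min_le_right 1 (κ ^ 2),
    sq_nonneg (sin θ), sq_nonneg (cos θ)]

theorem div_min_one_sq_eq_max_inv {κ : ℝ} (hκ : 0 < κ) : κ / min 1 (κ ^ 2) = max κ κ⁻¹ := by
  rcases le_total κ 1 with h | h
  · have h' : 1 ≤ κ⁻¹ := (one_le_inv₀ hκ).2 h
    rw [min_eq_right (by nlinarith), max_eq_right (h.trans h')]
    field_simp
  · have h' : κ⁻¹ ≤ 1 := inv_le_one_of_one_le₀ h
    rw [min_eq_left (by nlinarith), max_eq_left (h'.trans h), div_one]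

/-- `|η'(x)|` for `η x = 2 arctan (κ cot (x / 2))`, extended continuously to all of `ℝ`. -/
noncomputable def etaSlope (κ x : ℝ) : ℝ := κ / (sin (x / 2) ^ 2 + κ ^ 2 * cos (x / 2) ^ 2)

theorem hasDerivAt_two_mul_arctan_mul_cot_half (κ : ℝ) {x : ℝ} (hx : sin (x / 2) ≠ 0) :
    HasDerivAt (fun y => 2 * arctan (κ * cot (y / 2))) (-etaSlope κ x) x := by
  refine ((((hasDerivAt_cot hx).comp x ((hasDerivAt_id x).div_const 2)).const_mul κ).arctan
    |>.const_mul 2).congr_deriv ?_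
  simp only [Function.comp_apply, id, cot_eq_cos_div_sin, etaSlope]
  field_simp

theorem etaSlope_zero (κ : ℝ) : etaSlope κ 0 = κ⁻¹ := by
  simp [etaSlope, sq]

theorem etaSlope_pi (κ : ℝ) : etaSlope κ π = κ := by
  simp [etaSlope]

section

variable {κ : ℝ} (hκ : 0 < κ)
include hκ

theorem etaSlope_le_max (x : ℝ) : etaSlope κ x ≤ max κ κ⁻¹ := by
  rw [← div_min_one_sq_eq_max_inv hκ]
  exact div_le_div_of_nonneg_left hκ.le (by positivity) (min_one_sq_le_sin_sq_add_sq_mul_cos_sq _ _)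

theorem etaSlope_denom_pos (x : ℝ) : 0 < sin (x / 2) ^ 2 + κ ^ 2 * cos (x / 2) ^ 2 :=
  (lt_min one_pos (by positivity)).trans_le (min_one_sq_le_sin_sq_add_sq_mul_cos_sq _ _)

theorem etaSlope_pos (x : ℝ) : 0 < etaSlope κ x :=
  div_pos hκ (etaSlope_denom_pos hκ x)

theorem continuous_etaSlope : Continuous (etaSlope κ) :=
  continuous_const.div (by fun_prop) fun x => (etaSlope_denom_pos hκ x).ne'

theorem abs_deriv_two_mul_arctan_mul_cot_half {x : ℝ} (hx : x ∈ Ioo 0 π) :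
    |deriv (fun y => 2 * arctan (κ * cot (y / 2))) x| = etaSlope κ x := by
  have hsin : sin (x / 2) ≠ 0 :=
    (sin_pos_of_pos_of_lt_pi (by linarith [hx.1]) (by linarith [hx.2, pi_pos])).ne'
  rw [(hasDerivAt_two_mul_arctan_mul_cot_half κ hsin).deriv, abs_neg,
    abs_of_pos (etaSlope_pos hκ x)]

theorem isLUB_etaSlope_image_Ioo : IsLUB (etaSlope κ '' Ioo 0 π) (max κ κ⁻¹) := by
  refine isLUB_of_mem_closure (forall_mem_image.2 fun x _ => etaSlope_le_max hκ x) ?_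
  refine image_closure_subset_closure_image (continuous_etaSlope hκ) ?_
  rw [closure_Ioo pi_pos.ne]
  rcases max_choice κ κ⁻¹ with h | h <;> rw [h]
  · exact ⟨π, right_mem_Icc.2 pi_pos.le, etaSlope_pi κ⟩
  · exact ⟨0, left_mem_Icc.2 pi_pos.le, etaSlope_zero κ⟩

end

/-- `sup_{x ∈ (0,π)} |η_α'(x)| = K₁(α) = max{κ_α, 1/κ_α}`, with `κ_α = α/(1-α)`. -/
theorem eta_deriv_sup (α : ℝ) (hα0 : 0 < α) (hα1 : α < 1) :
    sSup ((fun x : ℝ =>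
        |deriv (fun y : ℝ => 2 * arctan ((α / (1 - α)) * Real.cot (y / 2))) x|) '' Ioo 0 π)
      = max (α / (1 - α)) ((1 - α) / α) := by
  have hκ : 0 < α / (1 - α) := div_pos hα0 (sub_pos.2 hα1)
  rw [image_congr fun x hx => abs_deriv_two_mul_arctan_mul_cot_half hκ hx, ← inv_div α]
  exact (isLUB_etaSlope_image_Ioo hκ).csSup_eq ((nonempty_Ioo.2 pi_pos).image _)
end

section
/- Let L_{α,n} be the n×n matrix with entries L[1,1] = 1+conj(α), L[n,n] = 1+α, L[k,k] = 2 for 2 ≤ k ≤ n-1, L[k,k+1] = L[k+1,k] = -1 for 1 ≤ k ≤ n-1, L[1,n] = -conj(α), L[n,1] = -α, and all other entries 0. Then for every complex α and every n ≥ 3, the characteristic polynomial of L_{α,n} satisfies det(λI - L_{α,n}) = (λ - 2·Re(α))·U_{n-1}((λ-2)/2) - 2·Re(α)·U_{n-2}((λ-2)/2) + 2·(-1)^{n+1}·Re(α), where U_k denotes the k-th Chebyshev polynomial of the second kind. In particular, the characteristic polynomial depends only on Re(α). -/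
/-!
With `y = (λ - 2) / 2`, the matrix `λ • 1 - L_{α,n}` is the tridiagonal matrix `B` with
diagonal `(2y + 1, 2y, …, 2y, 2y + 1)` and unit off-diagonals, plus the rank-one matrix
`(conj α • e₀ - α • e_{n-1}) (e_{n-1} - e₀)ᵀ`. The matrix determinant lemma
`det (B + u vᵀ) = det B + ∑ᵢ uᵢ det (B with row i replaced by v)` reduces the determinant to
`det B` and four corner cofactors of `B`. Expanding along the last row, tridiagonal determinants
obey the three-term recurrence of the Chebyshev polynomials `U_k(y)`, which gives closed forms for
all of them; the two diagonal corner cofactors coincide, so `conj α` and `α` only enter through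
`conj α + α = 2 Re α`.
-/

open Matrix Polynomial Chebyshev

variable {R : Type*} [CommRing R]

theorem Polynomial.Chebyshev.U_eval_add_two (y : R) (n : ℤ) :
    (U R (n + 2)).eval y = 2 * y * (U R (n + 1)).eval y - (U R n).eval y := by
  simp [U_add_two]

section DeterminantLemma

variable {ι : Type*} [Fintype ι] [DecidableEq ι]

theorem Matrix.det_add_vecMulVec_eq_update_zero (A : Matrix ι ι R) (u v : ι → R) (k : ι) :
    (A + vecMulVec u v).det = (A + vecMulVec (Function.update u k 0) v).det
      + u k * (A.updateRow k v + vecMulVec (Function.update u k 0) v).det := by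
  set u' := Function.update u k 0
  have hrow : A + vecMulVec u v
      = (A + vecMulVec u' v).updateRow k ((A + vecMulVec u' v) k + u k • v) := by
    ext i j
    by_cases hik : i = k
    · subst hik; simp [u', vecMulVec_apply]
    · simp [u', hik, vecMulVec_apply]
  have hrow' : (A + vecMulVec u' v).updateRow k v = A.updateRow k v + vecMulVec u' v := by
    ext i j
    by_cases hik : i = k
    · subst hik; simp [u', vecMulVec_apply]
    · simp [hik]
  rw [hrow, det_updateRow_add, updateRow_eq_self, det_updateRow_smul, hrow']

theorem Matrix.det_add_vecMulVec (A : Matrix ι ι R) (u v : ι → R) :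
    (A + vecMulVec u v).det = A.det + ∑ i, u i * (A.updateRow i v).det := by
  suffices h : ∀ (s : Finset ι) (A : Matrix ι ι R) (u : ι → R), (∀ i ∉ s, u i = 0) →
      (A + vecMulVec u v).det = A.det + ∑ i, u i * (A.updateRow i v).det from
    h Finset.univ A u fun i hi => absurd (Finset.mem_univ i) hi
  intro s
  induction s using Finset.induction_on with
  | empty =>
    intro A u hu
    simp [show u = 0 from funext fun i => hu i (Finset.notMem_empty i)]
  | insert k s _ ih =>
    intro A u hu
    set u' := Function.update u k 0
    have hu' : ∀ i ∉ s, u' i = 0 := by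
      intro i hi
      by_cases hik : i = k
      · simp [u', hik]
      · simp [u', hik, hu i (by simp [hik, hi])]
    have hcross : ∑ i, u' i * ((A.updateRow k v).updateRow i v).det = 0 := by
      refine Finset.sum_eq_zero fun i _ => ?_
      by_cases hik : i = k
      · simp [u', hik]
      · rw [det_zero_of_row_eq hik (by simp [updateRow_ne (Ne.symm hik)]), mul_zero]
    have hsplit : u = u' + Pi.single k (u k) := by
      ext i
      by_cases hik : i = k <;> simp [u', hik]
    rw [det_add_vecMulVec_eq_update_zero A u v k, ih A u' hu', ih _ u' hu', hcross, add_zero,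
      add_assoc]
    conv_rhs => rw [hsplit]
    simp [add_mul, Finset.sum_add_distrib, Pi.single_apply]

theorem Matrix.det_updateRow_single_sub_single (A : Matrix ι ι R) (i k l : ι) :
    (A.updateRow i (Pi.single k 1 - Pi.single l 1)).det = adjugate A k i - adjugate A l i := by
  rw [← cramer_transpose_apply, map_sub, Pi.sub_apply, cramer_transpose_apply,
    cramer_transpose_apply, adjugate_apply, adjugate_apply]

end DeterminantLemma

def Matrix.tridiag (d : ℕ → R) (n : ℕ) : Matrix (Fin n) (Fin n) R :=
  of fun i j =>
    if (i : ℕ) = j then d i else if (i : ℕ) + 1 = j ∨ (j : ℕ) + 1 = i then 1 else 0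

namespace Matrix

theorem tridiag_transpose (d : ℕ → R) (n : ℕ) : (tridiag d n)ᵀ = tridiag d n := by
  ext i j
  simp only [transpose_apply, tridiag, of_apply]
  split_ifs <;> simp_all

theorem tridiag_submatrix_castSucc (d : ℕ → R) (n : ℕ) :
    (tridiag d (n + 1)).submatrix Fin.castSucc Fin.castSucc = tridiag d n :=
  rfl

theorem tridiag_submatrix_succ (d : ℕ → R) (n : ℕ) :
    (tridiag d (n + 1)).submatrix Fin.succ Fin.succ = tridiag (fun i => d (i + 1)) n := by
  ext i j
  simp only [submatrix_apply, tridiag, of_apply, Fin.val_succ]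
  exact if_congr (by omega) rfl (if_congr (by omega) rfl rfl)

theorem det_tridiag_submatrix_succ_castSucc (d : ℕ → R) (n : ℕ) :
    ((tridiag d (n + 1)).submatrix Fin.succ Fin.castSucc).det = 1 := by
  rw [det_of_isUpperTriangular]
  · refine Finset.prod_eq_one fun i _ => ?_
    simp [tridiag]
  · intro i j (hij : j < i)
    simp only [submatrix_apply, tridiag, of_apply, Fin.val_succ, Fin.val_castSucc]
    rw [if_neg (by omega), if_neg (by omega)]

theorem det_tridiag_submatrix_castSucc_succ (d : ℕ → R) (n : ℕ) :
    ((tridiag d (n + 1)).submatrix Fin.castSucc Fin.succ).det = 1 := by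
  rw [← det_transpose, transpose_submatrix, tridiag_transpose,
    det_tridiag_submatrix_succ_castSucc]

theorem det_tridiag_submatrix_castSucc_succAbove (d : ℕ → R) (n : ℕ) :
    ((tridiag d (n + 2)).submatrix Fin.castSucc (Fin.last n).castSucc.succAbove).det =
      (tridiag d n).det := by
  rw [det_succ_column _ (Fin.last n), Fin.sum_univ_castSucc, Finset.sum_eq_zero]
  · have hcols :
        (Fin.last n).castSucc.succAbove ∘ Fin.castSucc = Fin.castSucc ∘ Fin.castSucc :=
      funext fun j => Fin.succAbove_castSucc_of_lt _ _ (Fin.castSucc_lt_last j)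
    have hent : (tridiag d (n + 2)) (Fin.last n).castSucc
        ((Fin.last n).castSucc.succAbove (Fin.last n)) = 1 := by
      simp [tridiag, Fin.succAbove]
    simp only [submatrix_apply, submatrix_submatrix, Fin.succAbove_last, hent, Fin.val_last,
      ← two_mul, pow_mul, neg_one_sq, one_pow, one_mul, zero_add]
    rw [hcols, ← submatrix_submatrix, tridiag_submatrix_castSucc, tridiag_submatrix_castSucc]
  · intro i _
    have : (tridiag d (n + 2)) i.castSucc.castSucc (Fin.last (n + 1)) = 0 := by
      simp only [tridiag, of_apply, Fin.val_castSucc, Fin.val_last]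
      rw [if_neg (by omega), if_neg (by omega)]
    simp [this]

theorem det_tridiag_succ_succ (d : ℕ → R) (n : ℕ) :
    (tridiag d (n + 2)).det = d (n + 1) * (tridiag d (n + 1)).det - (tridiag d n).det := by
  rw [det_succ_row _ (Fin.last (n + 1)), Fin.sum_univ_castSucc, Fin.sum_univ_castSucc,
    Finset.sum_eq_zero]
  · have hlast : (tridiag d (n + 2)) (Fin.last (n + 1)) (Fin.last (n + 1)) = d (n + 1) := by
      simp [tridiag]
    have hsub : (tridiag d (n + 2)) (Fin.last (n + 1)) (Fin.last n).castSucc = 1 := by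
      simp [tridiag]
    have hodd : (-1 : R) ^ (n + 1 + n) = -1 := Odd.neg_one_pow ⟨n, by ring⟩
    have heven : (-1 : R) ^ (n + 1 + (n + 1)) = 1 := Even.neg_one_pow ⟨n + 1, rfl⟩
    simp only [hlast, hsub, det_tridiag_submatrix_castSucc_succAbove, Fin.succAbove_last,
      tridiag_submatrix_castSucc, Fin.val_last, Fin.val_castSucc, hodd, heven]
    ring
  · intro i _
    have : (tridiag d (n + 2)) (Fin.last (n + 1)) i.castSucc.castSucc = 0 := by
      simp only [tridiag, of_apply, Fin.val_castSucc, Fin.val_last]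
      rw [if_neg (by omega), if_neg (by omega)]
    simp [this]

theorem det_tridiag_eq_U_eval_add (d : ℕ → R) (y : R) :
    ∀ k : ℕ, (∀ i, 0 < i → i < k → d i = 2 * y) →
      (tridiag d k).det = (U R k).eval y + (d 0 - 2 * y) * (U R (k - 1)).eval y
  | 0, _ => by simp
  | 1, _ => by simp [tridiag]
  | k + 2, hd => by
    rw [det_tridiag_succ_succ,
      det_tridiag_eq_U_eval_add d y (k + 1) fun i h0 h => hd i h0 (by omega),
      det_tridiag_eq_U_eval_add d y k fun i h0 h => hd i h0 (by omega),
      hd (k + 1) (by omega) (by omega)]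
    have h₁ := U_eval_add_two y (k : ℤ)
    have h₂ := U_eval_add_two y ((k : ℤ) - 1)
    rw [sub_add_cancel, show (k : ℤ) - 1 + 2 = k + 1 by ring] at h₂
    push_cast
    rw [show (k : ℤ) + 2 - 1 = k + 1 by ring, add_sub_cancel_right]
    linear_combination -h₁ - (d 0 - 2 * y) * h₂

theorem det_tridiag_eq_U_eval_add_of_ends (d : ℕ → R) (y : R) (k : ℕ)
    (hd : ∀ i, 0 < i → i < k + 1 → d i = 2 * y) :
    (tridiag d (k + 2)).det = (U R (k + 2)).eval y
      + (d 0 - 2 * y + (d (k + 1) - 2 * y)) * (U R (k + 1)).eval y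
      + (d 0 - 2 * y) * (d (k + 1) - 2 * y) * (U R k).eval y := by
  rw [det_tridiag_succ_succ, det_tridiag_eq_U_eval_add d y (k + 1) fun i h0 h => hd i h0 (by omega),
    det_tridiag_eq_U_eval_add d y k fun i h0 h => hd i h0 (by omega)]
  have h₁ := U_eval_add_two y (k : ℤ)
  have h₂ := U_eval_add_two y ((k : ℤ) - 1)
  rw [sub_add_cancel, show (k : ℤ) - 1 + 2 = k + 1 by ring] at h₂
  push_cast
  rw [add_sub_cancel_right]
  linear_combination -h₁ - (d 0 - 2 * y) * h₂

theorem det_tridiag_add_vecMulVec_corners (d : ℕ → R) (n : ℕ) (a b : R) :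
    (tridiag d (n + 1) + vecMulVec (Pi.single 0 a - Pi.single (Fin.last n) b)
        (Pi.single (Fin.last n) 1 - Pi.single 0 1)).det =
      (tridiag d (n + 1)).det + a * ((-1) ^ n - (tridiag (fun i => d (i + 1)) n).det)
        - b * ((tridiag d n).det - (-1) ^ n) := by
  rw [det_add_vecMulVec]
  simp only [Pi.sub_apply, Pi.single_apply, sub_mul, ite_mul, zero_mul, Finset.sum_sub_distrib,
    Finset.sum_ite_eq', Finset.mem_univ, if_true, det_updateRow_single_sub_single]
  simp [adjugate_fin_succ_eq_det_submatrix, tridiag_submatrix_succ, tridiag_submatrix_castSucc,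
    det_tridiag_submatrix_succ_castSucc, det_tridiag_submatrix_castSucc_succ]
  ring

end Matrix

def cycleLaplacian (α : ℂ) (n : ℕ) : Matrix (Fin n) (Fin n) ℂ :=
  of fun i j =>
    if i = j then
      (if (i : ℕ) = 0 then 1 + (starRingEnd ℂ) α
       else if (i : ℕ) = n - 1 then 1 + α else 2)
    else if (i : ℕ) + 1 = (j : ℕ) ∨ (j : ℕ) + 1 = (i : ℕ) then -1
    else if (i : ℕ) = 0 ∧ (j : ℕ) = n - 1 then -(starRingEnd ℂ) α
    else if (i : ℕ) = n - 1 ∧ (j : ℕ) = 0 then -α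
    else 0

theorem smul_one_sub_cycleLaplacian (α lam : ℂ) (m : ℕ) :
    lam • 1 - cycleLaplacian α (m + 3) =
      tridiag (fun i => if i = 0 ∨ i = m + 2 then lam - 1 else lam - 2) (m + 3) +
        vecMulVec (Pi.single 0 ((starRingEnd ℂ) α) - Pi.single (Fin.last (m + 2)) α)
          (Pi.single (Fin.last (m + 2)) 1 - Pi.single 0 1) := by
  ext i j
  simp only [cycleLaplacian, tridiag, Matrix.sub_apply, Matrix.add_apply, Matrix.smul_apply,
    one_apply, of_apply, vecMulVec_apply, Pi.sub_apply, Pi.single_apply, Fin.ext_iff,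
    Fin.val_zero, Fin.val_last, smul_eq_mul]
  split_ifs <;> first | ring1 | omega

theorem det_smul_one_sub_cycleLaplacian (α lam : ℂ) (m : ℕ) :
    (lam • 1 - cycleLaplacian α (m + 3)).det =
      lam * (U ℂ (m + 2)).eval ((lam - 2) / 2) - ((starRingEnd ℂ) α + α) *
        ((U ℂ (m + 2)).eval ((lam - 2) / 2) + (U ℂ (m + 1)).eval ((lam - 2) / 2)
          - (-1) ^ m) := by
  rw [smul_one_sub_cycleLaplacian, det_tridiag_add_vecMulVec_corners]
  set y := (lam - 2) / 2
  set d : ℕ → ℂ := fun i => if i = 0 ∨ i = m + 2 then lam - 1 else lam - 2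
  have hy : 2 * y = lam - 2 := by simp only [y]; ring
  have hd : ∀ i, 0 < i → i < m + 2 → d i = 2 * y := fun i h0 h => by
    simp only [d, hy, if_neg (show ¬(i = 0 ∨ i = m + 2) by omega)]
  rw [det_tridiag_eq_U_eval_add_of_ends d y (m + 1) fun i h0 h => hd i h0 h,
    det_tridiag_eq_U_eval_add_of_ends d y m fun i h0 h => hd i h0 (by omega),
    det_tridiag_eq_U_eval_add_of_ends _ y m fun i h0 h => hd (i + 1) (by omega) (by omega)]
  have hp : d 0 - 2 * y = 1 := by simp [d, hy]; ring
  have hq : d (m + 1 + 1) - 2 * y = 1 := by simp [d, hy]; ring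
  have hp' : d (0 + 1) - 2 * y = 0 := sub_eq_zero.2 (hd _ (by omega) (by omega))
  have hq' : d (m + 1) - 2 * y = 0 := sub_eq_zero.2 (hd _ (by omega) (by omega))
  have hU := U_eval_add_two y ((m : ℤ) + 1)
  rw [hp, hq, hp', hq']
  push_cast
  rw [show (m : ℤ) + 1 + 1 = m + 2 by ring] at hU ⊢
  linear_combination hU + eval y (U ℂ (m + 2)) * hy

/-- The characteristic polynomial of the complex laplacian matrix `L_{α,n}` of the weighted
`n`-cycle (one edge of weight `α`) is
`(λ - 2 Re α)·U_{n-1}((λ-2)/2) - 2 Re α·U_{n-2}((λ-2)/2) + 2(-1)^{n+1} Re α`;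
in particular it depends only on `Re α`. -/
theorem charpoly_laplacian_cycle (n : ℕ) (hn : 3 ≤ n) (α : ℂ)
    (L : Matrix (Fin n) (Fin n) ℂ)
    (hL : ∀ i j : Fin n, L i j =
      if i = j then
        (if (i : ℕ) = 0 then 1 + (starRingEnd ℂ) α
         else if (i : ℕ) = n - 1 then 1 + α else 2)
      else if (i : ℕ) + 1 = (j : ℕ) ∨ (j : ℕ) + 1 = (i : ℕ) then -1
      else if (i : ℕ) = 0 ∧ (j : ℕ) = n - 1 then -(starRingEnd ℂ) α
      else if (i : ℕ) = n - 1 ∧ (j : ℕ) = 0 then -α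
      else 0) :
    ∀ lam : ℂ,
      (lam • (1 : Matrix (Fin n) (Fin n) ℂ) - L).det
        = (lam - 2 * (α.re : ℂ)) * (Chebyshev.U ℂ ((n : ℤ) - 1)).eval ((lam - 2) / 2)
          - 2 * (α.re : ℂ) * (Chebyshev.U ℂ ((n : ℤ) - 2)).eval ((lam - 2) / 2)
          + 2 * (-1) ^ (n + 1) * (α.re : ℂ) := by
  obtain ⟨m, rfl⟩ : ∃ m, n = m + 3 := ⟨n - 3, by omega⟩
  intro lam
  have hre : (starRingEnd ℂ) α + α = 2 * (α.re : ℂ) := by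
    rw [add_comm, Complex.add_conj]; push_cast; ring
  rw [show L = cycleLaplacian α (m + 3) from Matrix.ext hL, det_smul_one_sub_cycleLaplacian, hre]
  push_cast
  rw [show (m : ℤ) + 3 - 1 = m + 2 by ring, show (m : ℤ) + 3 - 2 = m + 1 by ring]
  ring
end

section
/- For n ≥ 3 and real α, the characteristic polynomial of L_{α,n} factors as D_{α,n}(4 - t²) = 2·(-1)^n · p_n(t)·q_{α,n}(t)/t, where p_n(t) = (t² - 4)·U_{n-1}(t/2) and q_{α,n}(t) = (1-α)·T_n(t/2) + α·(t/2)·U_{n-1}(t/2), with T_n, U_n the Chebyshev polynomials of the first and second kind. -/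
open Polynomial Real

lemma polyKey (n : ℕ) (α : ℝ) :
    (X : ℝ[X]) * ((C 4 - X ^ 2 - C (2 * α)) *
        (Chebyshev.U ℝ ((n : ℤ) - 1)).comp ((C 2 - X ^ 2) * C (1 / 2))
      - C (2 * α) * (Chebyshev.U ℝ ((n : ℤ) - 2)).comp ((C 2 - X ^ 2) * C (1 / 2))
      + C (2 * (-1) ^ (n + 1) * α))
  = C (2 * (-1) ^ n) * ((X ^ 2 - C 4) * (Chebyshev.U ℝ ((n : ℤ) - 1)).comp (X * C (1 / 2)))
      * (C (1 - α) * (Chebyshev.T ℝ (n : ℤ)).comp (X * C (1 / 2))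
        + C α * (X * C (1 / 2)) * (Chebyshev.U ℝ ((n : ℤ) - 1)).comp (X * C (1 / 2))) := by
  apply eq_of_infinite_eval_eq
  apply Set.Infinite.mono (s := (fun θ : ℝ => 2 * cos θ) '' Set.Ioo 0 (π / 2))
  · rintro x ⟨θ, hθ, rfl⟩
    obtain ⟨hθ0, hθπ⟩ := hθ
    simp only [Set.mem_setOf_eq, eval_mul, eval_add, eval_sub, eval_comp, eval_pow, eval_X, eval_C]
    have hc : (0:ℝ) < cos θ := Real.cos_pos_of_mem_Ioo ⟨by linarith [Real.pi_pos], hθπ⟩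
    have hs : (0:ℝ) < sin θ := Real.sin_pos_of_pos_of_lt_pi hθ0 (by linarith [Real.pi_pos])
    have harg : (2 - (2 * cos θ) ^ 2) * (1 / 2) = cos (π - 2 * θ) := by
      rw [Real.cos_pi_sub, Real.cos_two_mul]; ring
    have harg2 : 2 * cos θ * (1 / 2) = cos θ := by ring
    rw [harg, harg2]
    have hU1 := Polynomial.Chebyshev.U_real_cos (π - 2 * θ) ((n : ℤ) - 1)
    have hU2 := Polynomial.Chebyshev.U_real_cos (π - 2 * θ) ((n : ℤ) - 2)
    have hU3 := Polynomial.Chebyshev.U_real_cos θ ((n : ℤ) - 1)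
    have hT := Polynomial.Chebyshev.T_real_cos θ (n : ℤ)
    push_cast at hU1 hU2 hU3 hT
    rw [show ((n:ℝ) - 1 + 1) * (π - 2 * θ) = n * π - n * (2 * θ) from by ring,
      Real.sin_nat_mul_pi_sub] at hU1
    rw [show ((n:ℝ) - 2 + 1) * (π - 2 * θ) = n * π - (n * (2 * θ) + (π - 2 * θ)) from by ring,
      Real.sin_nat_mul_pi_sub] at hU2
    rw [Real.sin_add, Real.sin_pi_sub, Real.cos_pi_sub] at hU2
    rw [show ((n:ℝ) - 1 + 1) * θ = n * θ from by ring] at hU3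
    have h2n : sin ((n:ℝ) * (2 * θ)) = 2 * sin ((n:ℝ) * θ) * cos ((n:ℝ) * θ) := by
      rw [show (n:ℝ) * (2 * θ) = 2 * ((n:ℝ) * θ) from by ring, Real.sin_two_mul]
    have c2n : cos ((n:ℝ) * (2 * θ)) = cos ((n:ℝ) * θ) ^ 2 - sin ((n:ℝ) * θ) ^ 2 := by
      rw [show (n:ℝ) * (2 * θ) = 2 * ((n:ℝ) * θ) from by ring, Real.cos_two_mul']
    have c2 : cos (2 * θ) = cos θ ^ 2 - sin θ ^ 2 := Real.cos_two_mul' θ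
    have s2 : sin (2 * θ) = 2 * sin θ * cos θ := Real.sin_two_mul θ
    rw [Real.sin_pi_sub] at hU1
    rw [Real.cos_pi_sub] at hU1 ⊢
    rw [h2n] at hU1 hU2
    rw [c2n] at hU2
    rw [c2] at hU1 hU2 ⊢
    rw [s2] at hU1 hU2
    rw [hT]
    have hpy : sin θ ^ 2 + cos θ ^ 2 = 1 := Real.sin_sq_add_cos_sq θ
    have hpyn : sin ((n:ℝ) * θ) ^ 2 + cos ((n:ℝ) * θ) ^ 2 = 1 := Real.sin_sq_add_cos_sq _
    set s := sin θ
    set c := cos θ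
    set S := sin ((n:ℝ) * θ)
    set K := cos ((n:ℝ) * θ)
    set E1 := eval (-(c ^ 2 - s ^ 2)) (Chebyshev.U ℝ ((n:ℤ) - 1))
    set E2 := eval (-(c ^ 2 - s ^ 2)) (Chebyshev.U ℝ ((n:ℤ) - 2))
    set E3 := eval c (Chebyshev.U ℝ ((n:ℤ) - 1))
    have hside : s ^ 2 * c ≠ 0 := by positivity
    have e : (-1:ℝ) ^ n = (-1:ℝ) ^ n := rfl
    apply mul_left_cancel₀ hside
    linear_combination
        (4*s*c - 2*s*c*α - 4*s*c^3) * hU1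
      + (-2*s*c*α) * hU2
      + (8*c^2*S*α*((-1:ℝ)^n) - 8*c^4*S*α*((-1:ℝ)^n) + 8*s*c*K*((-1:ℝ)^n)
          - 8*s*c*K*α*((-1:ℝ)^n) + 8*s*c^2*α*((-1:ℝ)^n)*E3 - 8*s*c^3*K*((-1:ℝ)^n)
          + 8*s*c^3*K*α*((-1:ℝ)^n) - 8*s*c^4*α*((-1:ℝ)^n)*E3) * hU3
      + (-4*c^2*α*((-1:ℝ)^n) + 4*c^2*K^2*α*((-1:ℝ)^n) - 4*c^2*S^2*α*((-1:ℝ)^n)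
          + 4*s*c*S*K*α*((-1:ℝ)^n)) * hpy
      + (4*c^2*α*((-1:ℝ)^n) - 4*c^4*α*((-1:ℝ)^n)) * hpyn
  · apply Set.Infinite.image
    · intro a ha b hb h
      exact Real.injOn_cos (Set.mem_Icc.2 ⟨le_of_lt ha.1, by linarith [ha.2, Real.pi_pos]⟩)
        (Set.mem_Icc.2 ⟨le_of_lt hb.1, by linarith [hb.2, Real.pi_pos]⟩) (by simpa using h)
    · exact Set.Ioo_infinite (by positivity)

lemma key (n : ℕ) (α t : ℝ) :
    t * ((4 - t ^ 2 - 2 * α) * (Chebyshev.U ℝ ((n : ℤ) - 1)).eval ((4 - t ^ 2 - 2) / 2)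
      - 2 * α * (Chebyshev.U ℝ ((n : ℤ) - 2)).eval ((4 - t ^ 2 - 2) / 2)
      + 2 * (-1) ^ (n + 1) * α)
  = 2 * (-1) ^ n * ((t ^ 2 - 4) * (Chebyshev.U ℝ ((n : ℤ) - 1)).eval (t / 2))
      * ((1 - α) * (Chebyshev.T ℝ (n : ℤ)).eval (t / 2)
        + α * (t / 2) * (Chebyshev.U ℝ ((n : ℤ) - 1)).eval (t / 2)) := by
  have h := congrArg (eval t) (polyKey n α)
  simp only [eval_mul, eval_add, eval_sub, eval_comp, eval_pow, eval_X, eval_C] at h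
  rw [show (2 - t ^ 2) * (1 / 2) = (4 - t ^ 2 - 2) / 2 from by ring,
    show t * (1 / 2) = t / 2 from by ring] at h
  linear_combination h

/-- Factorization `D_{α,n}(4 - t²) = 2(-1)^n p_n(t) q_{α,n}(t)/t`, where
`p_n(t) = (t²-4)U_{n-1}(t/2)` and `q_{α,n}(t) = (1-α)T_n(t/2) + α(t/2)U_{n-1}(t/2)`. -/
theorem charpoly_factorization (n : ℕ) (hn : 3 ≤ n) (α : ℝ)
    (D : ℝ → ℝ)
    (hD : ∀ lam : ℝ, D lam =
      (lam - 2 * α) * (Chebyshev.U ℝ ((n : ℤ) - 1)).eval ((lam - 2) / 2)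
        - 2 * α * (Chebyshev.U ℝ ((n : ℤ) - 2)).eval ((lam - 2) / 2)
        + 2 * (-1) ^ (n + 1) * α) :
    ∀ t : ℝ, t ≠ 0 →
      D (4 - t ^ 2)
        = 2 * (-1) ^ n
          * ((t ^ 2 - 4) * (Chebyshev.U ℝ ((n : ℤ) - 1)).eval (t / 2))
          * ((1 - α) * (Chebyshev.T ℝ (n : ℤ)).eval (t / 2)
              + α * (t / 2) * (Chebyshev.U ℝ ((n : ℤ) - 1)).eval (t / 2))
          / t := by
  intro t ht
  rw [hD, eq_div_iff ht]
  linear_combination key n α t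
end

section
/- For n ≥ 3, real α, and x in (0, π), the characteristic polynomial evaluated at g(x) = 2 - 2cos(x) satisfies D_{α,n}(g(x)) = (-1)^{n+1} · (4·sin(x/2)·sin(nx/2)/cos(x/2)) · ((1-α)·cos(nx/2) + α·cos(x/2)·sin(nx/2)/sin(x/2)), valid whenever cos(x/2) ≠ 0. -/
open Polynomial Real

/-- Trigonometric factorization of the characteristic polynomial at `g(x) = 2 - 2 cos x`. -/
theorem charpoly_factorization_trig (n : ℕ) (hn : 3 ≤ n) (α : ℝ)
    (D : ℝ → ℝ)
    (hD : ∀ lam : ℝ, D lam =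
      (lam - 2 * α) * (Chebyshev.U ℝ ((n : ℤ) - 1)).eval ((lam - 2) / 2)
        - 2 * α * (Chebyshev.U ℝ ((n : ℤ) - 2)).eval ((lam - 2) / 2)
        + 2 * (-1) ^ (n + 1) * α) :
    ∀ x : ℝ, 0 < x → x < π → Real.cos (x / 2) ≠ 0 →
      D (2 - 2 * Real.cos x)
        = (-1) ^ (n + 1)
          * (4 * Real.sin (x / 2) * Real.sin (n * x / 2) / Real.cos (x / 2))
          * ((1 - α) * Real.cos (n * x / 2)
              + α * Real.cos (x / 2) * Real.sin (n * x / 2) / Real.sin (x / 2)) := by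
  intro x hx0 hxpi hc
  have hpi := Real.pi_pos
  have hs0 : 0 < Real.sin (x / 2) :=
    Real.sin_pos_of_pos_of_lt_pi (by linarith) (by linarith)
  have hs : Real.sin (x / 2) ≠ 0 := ne_of_gt hs0
  have hsx0 : 0 < Real.sin x := Real.sin_pos_of_pos_of_lt_pi hx0 hxpi
  have hsx : Real.sin x ≠ 0 := ne_of_gt hsx0
  -- abbreviations
  set s := Real.sin (x / 2) with hsdef
  set c := Real.cos (x / 2) with hcdef
  set S := Real.sin (n * x / 2) with hSdef
  set C := Real.cos (n * x / 2) with hCdef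
  have hsinx : Real.sin x = 2 * s * c := by
    rw [show x = 2 * (x / 2) by ring, Real.sin_two_mul]
  have hcosx : Real.cos x = 1 - 2 * s ^ 2 := by
    rw [show x = 2 * (x / 2) by ring, Real.cos_two_mul']
    linear_combination Real.sin_sq_add_cos_sq (x / 2)
  have hsinnx : Real.sin ((n : ℝ) * x) = 2 * S * C := by
    rw [show (n : ℝ) * x = 2 * (n * x / 2) by ring, Real.sin_two_mul]
  have hcosnx : Real.cos ((n : ℝ) * x) = 1 - 2 * S ^ 2 := by
    rw [show (n : ℝ) * x = 2 * (n * x / 2) by ring, Real.cos_two_mul']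
    linear_combination Real.sin_sq_add_cos_sq ((n : ℝ) * x / 2)
  -- the eval point
  have harg : (2 - 2 * Real.cos x - 2) / 2 = -Real.cos x := by ring
  have hA := Polynomial.Chebyshev.U_real_cos (π - x) ((n : ℤ) - 1)
  have hB := Polynomial.Chebyshev.U_real_cos (π - x) ((n : ℤ) - 2)
  rw [Real.sin_pi_sub, Real.cos_pi_sub] at hA hB
  have e1 : ((((n : ℤ) - 1 : ℤ) : ℝ) + 1) * (π - x) = (n : ℝ) * π - (n : ℝ) * x := by
    push_cast; ring
  have e2 : ((((n : ℤ) - 2 : ℤ) : ℝ) + 1) * (π - x) = ((n - 1 : ℕ) : ℝ) * π - ((n : ℝ) - 1) * x := by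
    have : ((n - 1 : ℕ) : ℝ) = (n : ℝ) - 1 := by
      have : (1 : ℕ) ≤ n := by omega
      push_cast [Nat.cast_sub this]; ring
    rw [this]; push_cast; ring
  rw [e1, Real.sin_nat_mul_pi_sub, hsinnx] at hA
  rw [e2, Real.sin_nat_mul_pi_sub] at hB
  have hpow : ((-1 : ℝ)) ^ (n - 1) = -(-1 : ℝ) ^ n := by
    obtain ⟨m, rfl⟩ : ∃ m, n = m + 1 := ⟨n - 1, by omega⟩
    simp [pow_succ]
  rw [hpow] at hB
  have hsinxm : Real.sin (((n : ℝ) - 1) * x) = 2 * S * C * Real.cos x - (1 - 2 * S ^ 2) * Real.sin x := by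
    rw [show ((n : ℝ) - 1) * x = (n : ℝ) * x - x by ring, Real.sin_sub, hsinnx, hcosnx]
  rw [hsinxm] at hB
  -- now derive explicit values of the evals
  have hEA : (Chebyshev.U ℝ ((n : ℤ) - 1)).eval (-Real.cos x)
      = -((-1) ^ n * (2 * S * C)) / Real.sin x := by
    rw [eq_div_iff hsx]; exact hA
  have hEB : (Chebyshev.U ℝ ((n : ℤ) - 2)).eval (-Real.cos x)
      = -(-(-1) ^ n * (2 * S * C * Real.cos x - (1 - 2 * S ^ 2) * Real.sin x)) / Real.sin x := by
    rw [eq_div_iff hsx]; exact hB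
  rw [hD, harg, hEA, hEB, hsinx, hcosx, pow_succ]
  field_simp
  ring
end

section
/- For every n ≥ 3, every real α, and every even integer k with 0 ≤ k ≤ n-1, the number g(kπ/n) = 2 - 2cos(kπ/n) is an eigenvalue of the laplacian matrix L_{α,n}, i.e., D_{α,n}(g(kπ/n)) = 0. -/
open Polynomial Real

lemma U_eval_neg_one : ∀ m : ℕ, (Chebyshev.U ℝ (m : ℤ)).eval (-1 : ℝ) = (-1) ^ m * (m + 1)
  | 0 => by simp [Chebyshev.U_zero]
  | 1 => by norm_num [Chebyshev.U_one]
  | (m + 2) => by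
    have h2 := U_eval_neg_one (m + 1)
    have h1 := U_eval_neg_one m
    have hrec := Chebyshev.U_add_two ℝ (m : ℤ)
    have : ((m : ℤ) + 2) = ((m + 2 : ℕ) : ℤ) := by push_cast; ring
    rw [this] at hrec
    rw [hrec]
    simp only [eval_sub, eval_mul, eval_ofNat, eval_X]
    push_cast at h2 h1 ⊢
    rw [h2, h1]
    ring

/-- For every even `k` with `0 ≤ k ≤ n-1`, the number `g(kπ/n) = 2 - 2 cos(kπ/n)` is a root of
the characteristic polynomial `D_{α,n}`. -/
theorem trivial_eigenvalues (n : ℕ) (hn : 3 ≤ n) (α : ℝ)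
    (D : ℝ → ℝ)
    (hD : ∀ lam : ℝ, D lam =
      (lam - 2 * α) * (Chebyshev.U ℝ ((n : ℤ) - 1)).eval ((lam - 2) / 2)
        - 2 * α * (Chebyshev.U ℝ ((n : ℤ) - 2)).eval ((lam - 2) / 2)
        + 2 * (-1) ^ (n + 1) * α) :
    ∀ k : ℕ, Even k → k ≤ n - 1 →
      D (2 - 2 * Real.cos (k * π / n)) = 0 := by
  intro k hk hkn
  rcases Nat.eq_zero_or_pos k with rfl | hkpos
  · -- k = 0 case
    simp only [Nat.cast_zero, zero_mul, zero_div, Real.cos_zero]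
    rw [hD]
    norm_num
    obtain ⟨m, rfl⟩ : ∃ m, n = m + 3 := ⟨n - 3, by omega⟩
    have e1 : ((m + 3 : ℕ) : ℤ) - 1 = ((m + 2 : ℕ) : ℤ) := by push_cast; ring
    have e2 : ((m + 3 : ℕ) : ℤ) - 2 = ((m + 1 : ℕ) : ℤ) := by push_cast; ring
    rw [e1, e2, U_eval_neg_one, U_eval_neg_one]
    push_cast
    ring
  · -- k ≥ 1 (hence k ≥ 2 with k even), 0 < kπ/n < π
    have hk2 : 2 ≤ k := by rcases hk with ⟨j, rfl⟩; omega
    have hkn' : k < n := by omega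
    have hnpos : 0 < (n : ℝ) := by positivity
    set x : ℝ := k * π / n with hx
    set θ : ℝ := π - x with hθ
    have hxpos : 0 < x := by
      apply div_pos (mul_pos (by positivity) Real.pi_pos) hnpos
    have hxlt : x < π := by
      rw [hx, div_lt_iff₀ hnpos]
      have := Real.pi_pos
      calc (k : ℝ) * π < n * π := by
            apply mul_lt_mul_of_pos_right _ Real.pi_pos
            exact_mod_cast hkn'
        _ = π * n := by ring
    have hsθ : Real.sin θ = Real.sin x := by rw [hθ, Real.sin_pi_sub]
    have hsinpos : 0 < Real.sin θ := by
      rw [hsθ]; exact Real.sin_pos_of_pos_of_lt_pi hxpos hxlt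
    have hsne : Real.sin θ ≠ 0 := ne_of_gt hsinpos
    have hc : (2 - 2 * Real.cos (k * π / n) - 2) / 2 = Real.cos θ := by
      rw [hθ, Real.cos_pi_sub, ← hx]; ring
    have hnθ : (n : ℝ) * θ = ((((n : ℤ) - (k : ℤ)) : ℤ) : ℝ) * π := by
      rw [hθ, hx]
      push_cast
      field_simp
    have h1 := Chebyshev.U_real_cos θ ((n : ℤ) - 1)
    have h2 := Chebyshev.U_real_cos θ ((n : ℤ) - 2)
    have e1 : (((n : ℤ) - 1 : ℤ) : ℝ) + 1 = (n : ℝ) := by push_cast; ring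
    have e2 : (((n : ℤ) - 2 : ℤ) : ℝ) + 1 = (n : ℝ) - 1 := by push_cast; ring
    rw [e1] at h1
    rw [e2] at h2
    -- first term vanishes
    have hu1 : (Chebyshev.U ℝ ((n : ℤ) - 1)).eval (Real.cos θ) = 0 := by
      have : Real.sin ((n : ℝ) * θ) = 0 := by
        rw [hnθ]; exact Real.sin_int_mul_pi _
      rw [this] at h1
      exact (mul_eq_zero.mp h1).resolve_right hsne
    -- second term
    have hcastnk : ((n : ℤ) - (k : ℤ)) = ((n - k : ℕ) : ℤ) := by omega
    have hpar : ((-1 : ℝ) ^ (((n : ℤ) - (k : ℤ)) : ℤ)) = (-1 : ℝ) ^ n := by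
      rw [hcastnk, zpow_natCast]
      have h1 : (-1 : ℝ) ^ (n - k) * (-1 : ℝ) ^ k = (-1 : ℝ) ^ n := by
        rw [← pow_add]
        congr 1
        omega
      rw [hk.neg_one_pow, mul_one] at h1
      exact h1
    have hu2 : (Chebyshev.U ℝ ((n : ℤ) - 2)).eval (Real.cos θ) = -(-1 : ℝ) ^ n := by
      have hang : ((n : ℝ) - 1) * θ = ((((n : ℤ) - (k : ℤ)) : ℤ) : ℝ) * π - θ := by
        rw [← hnθ]; ring
      have hsin : Real.sin (((n : ℝ) - 1) * θ) = -((-1 : ℝ) ^ n * Real.sin θ) := by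
        rw [hang, Real.sin_int_mul_pi_sub, hpar]
      rw [hsin, show -((-1 : ℝ) ^ n * Real.sin θ) = (-(-1 : ℝ) ^ n) * Real.sin θ by ring] at h2
      exact mul_right_cancel₀ hsne h2
    rw [hD, hc, hu1, hu2, pow_succ]
    ring
end

section
/- Let 0 < α < 1, n ≥ 3, and let j be even with 2 ≤ j ≤ n. Then the function h(x) = nx - (j-1)π - η_α(x) has exactly one zero in the open interval ((j-1)π/n, jπ/n): h is strictly increasing on [(j-1)π/n, jπ/n], h((j-1)π/n) < 0, and h(jπ/n) > 0. -/
open Real Set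

lemma cot_lt_cot_aux {s t : ℝ} (hs : 0 < s) (hst : s < t) (ht : t < π) :
    Real.cot t < Real.cot s := by
  have hss : 0 < Real.sin s := Real.sin_pos_of_pos_of_lt_pi hs (by linarith)
  have hts : 0 < Real.sin t := Real.sin_pos_of_pos_of_lt_pi (by linarith) ht
  have hd : 0 < Real.sin (t - s) :=
    Real.sin_pos_of_pos_of_lt_pi (by linarith) (by linarith)
  rw [Real.cot_eq_cos_div_sin, Real.cot_eq_cos_div_sin, div_lt_div_iff₀ hts hss]
  have hsub := Real.sin_sub t s
  nlinarith [hsub, hd]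

/-- `h(x) = nx - (j-1)π - η_α(x)` has exactly one zero in `((j-1)π/n, jπ/n)`:
it is strictly increasing on the closed interval, negative at the left endpoint and
positive at the right endpoint. -/
theorem h_unique_zero (α : ℝ) (hα0 : 0 < α) (hα1 : α < 1)
    (n : ℕ) (hn : 3 ≤ n) (j : ℕ) (hj2 : 2 ≤ j) (hjn : j ≤ n) (hje : Even j)
    (η : ℝ → ℝ)
    (hη0 : η 0 = π) (hηπ : η π = 0)
    (hη : ∀ x ∈ Ioo (0 : ℝ) π, η x = 2 * arctan ((α / (1 - α)) * Real.cot (x / 2)))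
    (h : ℝ → ℝ)
    (hh : ∀ x : ℝ, h x = n * x - (j - 1) * π - η x) :
    StrictMonoOn h (Icc ((j - 1) * π / n) (j * π / n)) ∧
    h ((j - 1) * π / n) < 0 ∧
    0 < h (j * π / n) ∧
    ∃! x, x ∈ Ioo ((j - 1) * π / n) (j * π / n) ∧ h x = 0 := by
  have hπ := Real.pi_pos
  set κ := α / (1 - α) with hκdef
  have hκ : 0 < κ := div_pos hα0 (by linarith)
  have hn0 : (0 : ℝ) < n := by
    have : (3 : ℝ) ≤ n := by exact_mod_cast hn
    linarith
  have hj1 : (1 : ℝ) ≤ (j : ℝ) - 1 := by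
    have : (2 : ℝ) ≤ j := by exact_mod_cast hj2
    linarith
  have hjn' : (j : ℝ) ≤ n := by exact_mod_cast hjn
  set a := ((j : ℝ) - 1) * π / n with hadef
  set b := (j : ℝ) * π / n with hbdef
  have hab : a < b := by
    rw [hadef, hbdef, div_lt_div_iff₀ hn0 hn0]
    nlinarith
  have ha0 : 0 < a := div_pos (mul_pos (by linarith) hπ) hn0
  have hbπ : b ≤ π := by
    rw [hbdef, div_le_iff₀ hn0]
    nlinarith
  have haπ : a < π := lt_of_lt_of_le hab hbπ
  -- key : η agrees with the arctan formula on [a, b]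
  have key : ∀ x ∈ Icc a b, η x = 2 * arctan (κ * Real.cot (x / 2)) := by
    intro x hx
    rcases lt_or_eq_of_le (hx.2.trans hbπ) with hxπ | hxπ
    · exact hη x ⟨lt_of_lt_of_le ha0 hx.1, hxπ⟩
    · rw [hxπ, hηπ]
      have : Real.cot (π / 2) = 0 := by
        rw [Real.cot_eq_cos_div_sin, Real.cos_pi_div_two, zero_div]
      rw [this, mul_zero, Real.arctan_zero, mul_zero]
  -- strict antitonicity of the arctan formula
  have hanti : ∀ x ∈ Icc a b, ∀ y ∈ Icc a b, x < y →
      2 * arctan (κ * Real.cot (y / 2)) < 2 * arctan (κ * Real.cot (x / 2)) := by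
    intro x hx y hy hxy
    have hx0 : 0 < x / 2 := by
      have := lt_of_lt_of_le ha0 hx.1; linarith
    have hyπ : y / 2 < π := by
      have := hy.2.trans hbπ; linarith
    have hcot := cot_lt_cot_aux hx0 (by linarith) hyπ
    have := Real.arctan_strictMono ((mul_lt_mul_iff_right₀ hκ).mpr hcot)
    linarith
  -- strict monotonicity of h
  have hmono : StrictMonoOn h (Icc a b) := by
    intro x hx y hy hxy
    rw [hh x, hh y, key x hx, key y hy]
    have h1 := hanti x hx y hy hxy
    have h2 : (n : ℝ) * x < n * y := by nlinarith
    linarith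
  -- value at a
  have hna : (n : ℝ) * a = ((j : ℝ) - 1) * π := by
    rw [hadef]; field_simp
  have hcota : 0 < Real.cot (a / 2) := by
    rw [Real.cot_eq_cos_div_sin]
    apply div_pos
    · apply Real.cos_pos_of_mem_Ioo
      constructor <;> [linarith; linarith]
    · exact Real.sin_pos_of_pos_of_lt_pi (by linarith) (by linarith)
  have hha : h a < 0 := by
    rw [hh a, key a ⟨le_refl a, le_of_lt hab⟩, hna]
    have : 0 < arctan (κ * Real.cot (a / 2)) := by
      have := Real.arctan_strictMono (mul_pos hκ hcota)
      rwa [Real.arctan_zero] at this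
    linarith
  -- value at b
  have hnb : (n : ℝ) * b = (j : ℝ) * π := by
    rw [hbdef]; field_simp
  have hhb : 0 < h b := by
    rw [hh b, key b ⟨le_of_lt hab, le_refl b⟩, hnb]
    have := Real.arctan_lt_pi_div_two (κ * Real.cot (b / 2))
    linarith
  -- continuity of h on [a, b]
  have hcont : ContinuousOn h (Icc a b) := by
    have heq : EqOn h
        (fun x => (n : ℝ) * x - ((j : ℝ) - 1) * π -
          2 * arctan (κ * (Real.cos (x / 2) / Real.sin (x / 2)))) (Icc a b) := by
      intro x hx
      rw [hh x, key x hx, Real.cot_eq_cos_div_sin]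
    apply ContinuousOn.congr _ heq
    apply ContinuousOn.sub
    · apply ContinuousOn.sub
      · exact (continuous_const.mul continuous_id).continuousOn
      · exact continuousOn_const
    · apply ContinuousOn.mul continuousOn_const
      apply Real.continuous_arctan.comp_continuousOn
      apply ContinuousOn.mul continuousOn_const
      apply ContinuousOn.div
      · exact (Real.continuous_cos.comp (continuous_id.div_const 2)).continuousOn
      · exact (Real.continuous_sin.comp (continuous_id.div_const 2)).continuousOn
      · intro x hx
        have h1 : 0 < x / 2 := by
          have := lt_of_lt_of_le ha0 hx.1; linarith
        have h2 : x / 2 < π := by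
          have := hx.2.trans hbπ; linarith
        exact (Real.sin_pos_of_pos_of_lt_pi h1 h2).ne'
  refine ⟨hmono, hha, hhb, ?_⟩
  have hmem : (0 : ℝ) ∈ Ioo (h a) (h b) := ⟨hha, hhb⟩
  obtain ⟨x, hx, hx0⟩ := intermediate_value_Ioo (le_of_lt hab) hcont hmem
  refine ⟨x, ⟨hx, hx0⟩, ?_⟩
  rintro y ⟨hy, hy0⟩
  exact hmono.injOn (Ioo_subset_Icc_self hy) (Ioo_subset_Icc_self hx)
    (by rw [hy0, hx0])
end

section
/- Let 0 < α < 1 and 0 < x < π with tan(nx/2) defined. Then the equation tan(nx/2) = -((1-α)/α)·tan(x/2), restricted to x in the interval ((j-1)π/n, jπ/n) with j even, is equivalent to the equation nx = (j-1)π + η_α(x), where η_α(x) = 2·arctan((α/(1-α))·cot(x/2)). -/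
open Real Set

/-- For `x` in `((j-1)π/n, jπ/n)` with `j` even and `tan(nx/2)` defined, the equation
`tan(nx/2) = -((1-α)/α)·tan(x/2)` is equivalent to `nx = (j-1)π + η_α(x)`. -/
theorem tangent_equation_equiv (α : ℝ) (hα0 : 0 < α) (hα1 : α < 1)
    (n : ℕ) (hn : 3 ≤ n) (j : ℕ) (hj2 : 2 ≤ j) (hjn : j ≤ n) (hje : Even j) :
    ∀ x ∈ Ioo ((j - 1) * π / n) (j * π / n), Real.cos (n * x / 2) ≠ 0 →
      (Real.tan (n * x / 2) = -((1 - α) / α) * Real.tan (x / 2) ↔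
        n * x = (j - 1) * π + 2 * arctan ((α / (1 - α)) * Real.cot (x / 2))) := by
  intro x hx hc
  obtain ⟨m, hm⟩ := hje
  have hm' : j = 2 * m := by omega
  have hm1 : 1 ≤ m := by omega
  have hn0 : (0:ℝ) < n := by exact Nat.cast_pos.mpr (by omega)
  have hπ := pi_pos
  have hjR : (j:ℝ) = 2 * m := by exact_mod_cast hm'
  have hjnR : (j:ℝ) ≤ n := by exact_mod_cast hjn
  have hj2R : (2:ℝ) ≤ j := by exact_mod_cast hj2
  -- bounds on x
  have hx1 : ((j:ℝ) - 1) * π < n * x := by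
    have := hx.1
    rw [div_lt_iff₀ hn0] at this
    linarith
  have hx2 : (n:ℝ) * x < j * π := by
    have := hx.2
    rw [lt_div_iff₀ hn0] at this
    linarith
  have hx0 : 0 < x := by
    nlinarith [hx.1, mul_pos (mul_pos hn0 hπ) hn0]
  have hxπ : x < π := by nlinarith
  -- tan(x/2) > 0
  have htx : 0 < Real.tan (x / 2) :=
    Real.tan_pos_of_pos_of_lt_pi_div_two (by linarith) (by linarith)
  have hcot : Real.cot (x / 2) = (Real.tan (x / 2))⁻¹ := by
    rw [Real.cot_eq_cos_div_sin, Real.tan_eq_sin_div_cos, inv_div]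
  have h1α : 0 < 1 - α := by linarith
  have hcpos : 0 < (α / (1 - α)) * Real.cot (x / 2) := by
    rw [hcot]; positivity
  set c := (α / (1 - α)) * Real.cot (x / 2) with hcdef
  set θ := arctan c with hθdef
  have hθ0 : 0 < θ := by rw [hθdef, ← arctan_zero]; exact arctan_strictMono hcpos
  have hθπ : θ < π / 2 := arctan_lt_pi_div_two c
  have htanθ : Real.tan θ = c := tan_arctan c
  -- tan(θ - π/2) equals RHS value
  have hval : Real.tan (θ - π / 2) = -((1 - α) / α) * Real.tan (x / 2) := by
    have : θ - π / 2 = -(π / 2 - θ) := by ring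
    rw [this, Real.tan_neg, Real.tan_pi_div_two_sub, htanθ, hcdef, hcot]
    field_simp
  -- periodicity: tan (n x / 2) = tan (n x / 2 - m π)
  have hper : Real.tan ((n:ℝ) * x / 2) = Real.tan ((n:ℝ) * x / 2 - m * π) := by
    have := (Real.tan_periodic.nat_mul m) ((n:ℝ) * x / 2 - m * π)
    rw [sub_add_cancel] at this
    exact this
  have hu1 : -(π / 2) < (n:ℝ) * x / 2 - m * π := by nlinarith
  have hu2 : (n:ℝ) * x / 2 - m * π < 0 := by nlinarith
  constructor
  · intro h
    have heq : Real.tan ((n:ℝ) * x / 2 - m * π) = Real.tan (θ - π / 2) := by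
      rw [← hper, h, hval]
    have := Real.injOn_tan ⟨hu1, by linarith⟩ ⟨by linarith, by linarith⟩ heq
    have : (n:ℝ) * x / 2 - m * π = θ - π / 2 := this
    rw [hjR]
    linarith
  · intro h
    have hu : (n:ℝ) * x / 2 - m * π = θ - π / 2 := by
      rw [hjR] at h; linarith
    rw [hper, hu, hval]
end

section
/- Let 0 < α < 1, n > K₁(α) = max{α/(1-α), (1-α)/α}, and j even with 2 ≤ j ≤ n. Then the map f(x) = ((j-1)π + η_α(x))/n maps the closed interval [(j-1)π/n, jπ/n] into itself and is a contraction with Lipschitz constant K₁(α)/n < 1; hence f has a unique fixed point in this interval. -/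
/-!
Write `κ = κ_α`. On `(0, 2π)` the map `η_α` is smooth with derivative
`-κ / (sin² (x/2) + κ² cos² (x/2))`, whose absolute value is at most `max κ κ⁻¹ = K₁(α)`,
and it maps `(0, π]` into `[0, π]`. Hence `f` maps `[(j-1)π/n, jπ/n]` into itself with
Lipschitz constant `K₁(α)/n < 1`; the intermediate value theorem gives a fixed point and
the contraction property makes it unique.
-/

open Real Set

/-- `η_α` for `κ = κ_α`, on `(0, π]`; at `0` it is `0` rather than `π`, since `cot 0 = 0`. -/
noncomputable def eta (κ x : ℝ) : ℝ := 2 * arctan (κ * cot (x / 2))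

lemma eta_pi (κ : ℝ) : eta κ π = 0 := by
  simp [eta, cot_eq_cos_div_sin]

lemma eta_mem_Icc {κ x : ℝ} (hκ : 0 ≤ κ) (hx : x ∈ Icc 0 π) : eta κ x ∈ Icc 0 π := by
  have hcot : 0 ≤ κ * cot (x / 2) := by
    rw [cot_eq_cos_div_sin]
    refine mul_nonneg hκ
      (div_nonneg (cos_nonneg_of_mem_Icc ⟨?_, ?_⟩) (sin_nonneg_of_nonneg_of_le_pi ?_ ?_))
    all_goals linarith [hx.1, hx.2, pi_pos]
  have harctan : 0 ≤ arctan (κ * cot (x / 2)) := arctan_nonneg.2 hcot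
  have := arctan_lt_pi_div_two (κ * cot (x / 2))
  constructor <;> simp only [eta] <;> linarith

lemma hasDerivAt_eta (κ : ℝ) {x : ℝ} (hx : sin (x / 2) ≠ 0) :
    HasDerivAt (eta κ) (-(κ / (sin (x / 2) ^ 2 + κ ^ 2 * cos (x / 2) ^ 2))) x := by
  have hcot : HasDerivAt (fun y ↦ cos (y / 2) / sin (y / 2))
      ((-sin (x / 2) * sin (x / 2) - cos (x / 2) * cos (x / 2)) / sin (x / 2) ^ 2 * (1 / 2)) x :=
    HasDerivAt.comp (h₂ := fun u ↦ cos u / sin u) x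
      ((hasDerivAt_cos _).div (hasDerivAt_sin _) hx) ((hasDerivAt_id x).div_const 2)
  have h := ((hasDerivAt_arctan _).comp x (hcot.const_mul κ)).const_mul 2
  have heta : eta κ = fun y ↦ 2 * arctan (κ * (cos (y / 2) / sin (y / 2))) := by
    funext y; simp only [eta, cot_eq_cos_div_sin]
  rw [heta]
  refine h.congr_deriv ?_
  have hsc := sin_sq_add_cos_sq (x / 2)
  field_simp
  linear_combination (-κ) * hsc

lemma div_sq_add_mul_sq_le_max {κ s c : ℝ} (hκ : 0 < κ) (hsc : s ^ 2 + c ^ 2 = 1) :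
    κ / (s ^ 2 + κ ^ 2 * c ^ 2) ≤ max κ κ⁻¹ := by
  rcases le_total κ 1 with hκ1 | hκ1
  · have hκsq : κ ^ 2 ≤ 1 := by nlinarith
    have hden : κ ^ 2 ≤ s ^ 2 + κ ^ 2 * c ^ 2 := by
      nlinarith [mul_nonneg (sq_nonneg s) (sub_nonneg.2 hκsq)]
    calc κ / (s ^ 2 + κ ^ 2 * c ^ 2) ≤ κ / κ ^ 2 := by gcongr
      _ = κ⁻¹ := by field_simp
      _ ≤ max κ κ⁻¹ := le_max_right _ _
  · have hκsq : 1 ≤ κ ^ 2 := by nlinarith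
    have hden : 1 ≤ s ^ 2 + κ ^ 2 * c ^ 2 := by
      nlinarith [mul_nonneg (sq_nonneg c) (sub_nonneg.2 hκsq)]
    calc κ / (s ^ 2 + κ ^ 2 * c ^ 2) ≤ κ / 1 := by gcongr
      _ = κ := div_one κ
      _ ≤ max κ κ⁻¹ := le_max_left _ _

lemma abs_eta_sub_le {κ x y : ℝ} (hκ : 0 < κ) (hx : x ∈ Ioo 0 (2 * π))
    (hy : y ∈ Ioo 0 (2 * π)) :
    |eta κ x - eta κ y| ≤ max κ κ⁻¹ * |x - y| := by
  have hsin : ∀ z ∈ Ioo 0 (2 * π), 0 < sin (z / 2) := fun z hz ↦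
    sin_pos_of_pos_of_lt_pi (by linarith [hz.1]) (by linarith [hz.2])
  have hderiv : ∀ z ∈ Ioo 0 (2 * π),
      ‖-(κ / (sin (z / 2) ^ 2 + κ ^ 2 * cos (z / 2) ^ 2))‖ ≤ max κ κ⁻¹ := by
    intro z hz
    have hden : 0 < sin (z / 2) ^ 2 + κ ^ 2 * cos (z / 2) ^ 2 := by
      have := hsin z hz; positivity
    rw [norm_neg, Real.norm_of_nonneg (div_pos hκ hden).le]
    exact div_sq_add_mul_sq_le_max hκ (sin_sq_add_cos_sq _)
  simpa only [Real.norm_eq_abs] using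
    (convex_Ioo 0 (2 * π)).norm_image_sub_le_of_norm_hasDerivWithin_le
      (fun z hz ↦ (hasDerivAt_eta κ (hsin z hz).ne').hasDerivWithinAt) hderiv hy hx

lemma existsUnique_fixedPt_of_mapsTo_Icc {f : ℝ → ℝ} {a b L : ℝ} (hab : a ≤ b)
    (hmaps : MapsTo f (Icc a b) (Icc a b)) (hL : L < 1)
    (hlip : ∀ x ∈ Icc a b, ∀ y ∈ Icc a b, |f x - f y| ≤ L * |x - y|) :
    ∃! x, x ∈ Icc a b ∧ f x = x := by
  have hcont : ContinuousOn (fun x ↦ f x - x) (Icc a b) := by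
    refine ContinuousOn.sub (LipschitzOnWith.continuousOn (K := 1) ?_) continuousOn_id
    refine LipschitzOnWith.of_dist_le_mul fun x hx y hy ↦ ?_
    rw [Real.dist_eq, Real.dist_eq, NNReal.coe_one, one_mul]
    exact (hlip x hx y hy).trans (mul_le_of_le_one_left (abs_nonneg _) hL.le)
  have hfa := (hmaps (left_mem_Icc.2 hab)).1
  have hfb := (hmaps (right_mem_Icc.2 hab)).2
  obtain ⟨x, hx, hfx⟩ := intermediate_value_Icc' hab hcont
    (show (0 : ℝ) ∈ Icc (f b - b) (f a - a) from ⟨by linarith, by linarith⟩)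
  rw [sub_eq_zero] at hfx
  refine ⟨x, ⟨hx, hfx⟩, fun y ⟨hy, hfy⟩ ↦ ?_⟩
  have h := hlip y hy x hx
  rw [hfy, hfx] at h
  by_contra hne
  have hpos : 0 < |y - x| := abs_pos.2 (sub_ne_zero.2 hne)
  nlinarith

theorem main_map_contraction_general (α : ℝ) (hα0 : 0 < α) (hα1 : α < 1)
    (n : ℕ) (hnK : max (α / (1 - α)) ((1 - α) / α) < n)
    (j : ℕ) (hj2 : 2 ≤ j) (hjn : j ≤ n)
    (η : ℝ → ℝ)
    (hηπ : η π = 0)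
    (hη : ∀ x ∈ Ioo (0 : ℝ) π, η x = 2 * arctan ((α / (1 - α)) * Real.cot (x / 2)))
    (f : ℝ → ℝ)
    (hf : ∀ x : ℝ, f x = ((j - 1) * π + η x) / n) :
    MapsTo f (Icc ((j - 1) * π / n) (j * π / n)) (Icc ((j - 1) * π / n) (j * π / n)) ∧
    (∀ x ∈ Icc ((j - 1) * π / n) (j * π / n), ∀ y ∈ Icc ((j - 1) * π / n) (j * π / n),
      |f x - f y| ≤ (max (α / (1 - α)) ((1 - α) / α) / n) * |x - y|) ∧
    max (α / (1 - α)) ((1 - α) / α) / n < 1 ∧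
    ∃! x, x ∈ Icc ((j - 1) * π / n) (j * π / n) ∧ f x = x := by
  rw [← inv_div α] at hnK ⊢
  set κ := α / (1 - α)
  set I := Icc ((j - 1) * π / n) (j * π / n)
  have hκ : 0 < κ := div_pos hα0 (sub_pos.2 hα1)
  have hn : (0 : ℝ) < n := hκ.trans_le (le_max_left κ κ⁻¹) |>.trans hnK
  have hj : (2 : ℝ) ≤ j := by exact_mod_cast hj2
  have hjn : (j : ℝ) ≤ n := by exact_mod_cast hjn
  have hsub : I ⊆ Ioc 0 π := fun x hx ↦
    ⟨(div_pos (by nlinarith [pi_pos]) hn).trans_le hx.1,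
      hx.2.trans ((div_le_iff₀ hn).2 (by nlinarith [pi_pos]))⟩
  have hηeta : ∀ x ∈ Ioc 0 π, η x = eta κ x := fun x hx ↦
    hx.2.eq_or_lt.elim (fun h ↦ by rw [h, hηπ, eta_pi]) fun h ↦ hη x ⟨hx.1, h⟩
  have hmaps : MapsTo f I I := by
    intro x hx
    have hηx := hηeta x (hsub hx) ▸ eta_mem_Icc hκ.le (Ioc_subset_Icc_self (hsub hx))
    rw [hf x]
    constructor <;> gcongr <;> linarith [hηx.1, hηx.2]
  have hlip : ∀ x ∈ I, ∀ y ∈ I, |f x - f y| ≤ max κ κ⁻¹ / n * |x - y| := by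
    intro x hx y hy
    have hIoo : Ioc 0 π ⊆ Ioo 0 (2 * π) := fun z hz ↦ ⟨hz.1, by linarith [hz.2, pi_pos]⟩
    rw [hf x, hf y, ← sub_div, add_sub_add_left_eq_sub, abs_div, abs_of_pos hn,
      hηeta x (hsub hx), hηeta y (hsub hy), div_mul_eq_mul_div]
    exact div_le_div_of_nonneg_right (abs_eta_sub_le hκ (hIoo (hsub hx)) (hIoo (hsub hy))) hn.le
  have hlt : max κ κ⁻¹ / n < 1 := (div_lt_one hn).2 hnK
  exact ⟨hmaps, hlip, hlt, existsUnique_fixedPt_of_mapsTo_Icc (by gcongr; linarith) hmaps hlt hlip⟩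

/-- For `n > K₁(α)` and even `j`, the map `f(x) = ((j-1)π + η_α(x))/n` maps
`[(j-1)π/n, jπ/n]` into itself, is a contraction with constant `K₁(α)/n < 1`, and has a
unique fixed point in this interval. -/
theorem main_map_contraction (α : ℝ) (hα0 : 0 < α) (hα1 : α < 1)
    (n : ℕ) (hn : 3 ≤ n) (hnK : max (α / (1 - α)) ((1 - α) / α) < n)
    (j : ℕ) (hj2 : 2 ≤ j) (hjn : j ≤ n) (hje : Even j)
    (η : ℝ → ℝ)
    (hη0 : η 0 = π) (hηπ : η π = 0)
    (hη : ∀ x ∈ Ioo (0 : ℝ) π, η x = 2 * arctan ((α / (1 - α)) * Real.cot (x / 2)))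
    (f : ℝ → ℝ)
    (hf : ∀ x : ℝ, f x = ((j - 1) * π + η x) / n) :
    MapsTo f (Icc ((j - 1) * π / n) (j * π / n)) (Icc ((j - 1) * π / n) (j * π / n)) ∧
    (∀ x ∈ Icc ((j - 1) * π / n) (j * π / n), ∀ y ∈ Icc ((j - 1) * π / n) (j * π / n),
      |f x - f y| ≤ (max (α / (1 - α)) ((1 - α) / α) / n) * |x - y|) ∧
    max (α / (1 - α)) ((1 - α) / α) / n < 1 ∧
    ∃! x, x ∈ Icc ((j - 1) * π / n) (j * π / n) ∧ f x = x :=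
  main_map_contraction_general α hα0 hα1 n hnK j hj2 hjn η hηπ hη f hf
end

section
/- (Linear convergence of Newton's method for convex functions.) Let f : [a,b] → ℝ be differentiable and convex with f' > 0 on [a,b], and suppose f(c) = 0 for some c in [a,b]. Let y₀ ∈ [c,b] and define y_{m+1} = y_m - f(y_m)/f'(y_m). Then for every m, y_m ∈ [c,b], the sequence (y_m) is nonincreasing and converges to c, and y_m - c ≤ (b-a)·(1 - f'(a)/f'(b))^m. -/
open Set Filter

/-- Linear convergence of Newton's method for a convex function, starting on the right of the
root: the iterates stay in `[c,b]`, decrease, converge to `c`, and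
`y_m - c ≤ (b-a)(1 - f'(a)/f'(b))^m`. -/
theorem newton_convex_linear_convergence
    (a b c : ℝ) (hab : a < b)
    (f f' : ℝ → ℝ)
    (hderiv : ∀ x ∈ Icc a b, HasDerivWithinAt f (f' x) (Icc a b) x)
    (hpos : ∀ x ∈ Icc a b, 0 < f' x)
    (hconv : ConvexOn ℝ (Icc a b) f)
    (hc : c ∈ Icc a b) (hfc : f c = 0)
    (y : ℕ → ℝ) (hy0 : y 0 ∈ Icc c b)
    (hrec : ∀ m : ℕ, y (m + 1) = y m - f (y m) / f' (y m)) :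
    (∀ m : ℕ, y m ∈ Icc c b) ∧
    Antitone y ∧
    Tendsto y atTop (nhds c) ∧
    ∀ m : ℕ, y m - c ≤ (b - a) * (1 - f' a / f' b) ^ m := by
  set r : ℝ := 1 - f' a / f' b with hr
  have ha : (a : ℝ) ∈ Icc a b := left_mem_Icc.2 hab.le
  have hb : (b : ℝ) ∈ Icc a b := right_mem_Icc.2 hab.le
  -- monotonicity of f'
  have hmono : ∀ x ∈ Icc a b, ∀ z ∈ Icc a b, x ≤ z → f' x ≤ f' z := by
    intro x hx z hz hxz
    rcases eq_or_lt_of_le hxz with rfl | h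
    · exact le_rfl
    · exact le_trans (hconv.le_slope_of_hasDerivWithinAt hx hz h (hderiv x hx))
        (hconv.slope_le_of_hasDerivWithinAt hx hz h (hderiv z hz))
  have hr0 : 0 ≤ r := by
    have := hmono a ha b hb hab.le
    have hb' := hpos b hb
    rw [hr, sub_nonneg, div_le_one hb']
    exact this
  have hr1 : r < 1 := by
    have := div_pos (hpos a ha) (hpos b hb)
    rw [hr]; linarith
  -- membership of [c,b] in [a,b]
  have hsub : ∀ x ∈ Icc c b, x ∈ Icc a b := fun x hx => ⟨le_trans hc.1 hx.1, hx.2⟩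
  -- one Newton step: stays in [c,b], decreases, and contracts
  have step : ∀ x ∈ Icc c b,
      (x - f x / f' x ∈ Icc c b) ∧ x - f x / f' x ≤ x ∧
      (x - f x / f' x) - c ≤ r * (x - c) := by
    intro x hx
    have hxab := hsub x hx
    have hfx' := hpos x hxab
    rcases eq_or_lt_of_le hx.1 with rfl | hcx
    · simp [hfc, hx, mul_nonneg hr0]
    -- c < x
    have hslope1 : f' c ≤ slope f c x :=
      hconv.le_slope_of_hasDerivWithinAt hc hxab hcx (hderiv c hc)
    have hslope2 : slope f c x ≤ f' x :=
      hconv.slope_le_of_hasDerivWithinAt hc hxab hcx (hderiv x hxab)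
    have hxc : 0 < x - c := sub_pos.2 hcx
    rw [slope_def_field, hfc, sub_zero] at hslope1 hslope2
    have hlow : f' c * (x - c) ≤ f x := by
      rw [div_le_iff₀ hxc] at hslope2
      calc f' c * (x - c) ≤ (f x / (x - c)) * (x - c) :=
            mul_le_mul_of_nonneg_right hslope1 hxc.le
        _ = f x := div_mul_cancel₀ _ hxc.ne'
    have hup : f x ≤ f' x * (x - c) := by
      rw [div_le_iff₀ hxc] at hslope2
      exact hslope2
    have hfx0 : 0 ≤ f x := le_trans (mul_nonneg (hpos c hc).le hxc.le) hlow
    have h1 : x - f x / f' x ≤ x := by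
      have : 0 ≤ f x / f' x := div_nonneg hfx0 hfx'.le
      linarith
    have h2 : c ≤ x - f x / f' x := by
      have : f x / f' x ≤ x - c := by
        rw [div_le_iff₀ hfx']
        calc f x ≤ f' x * (x - c) := hup
          _ = (x - c) * f' x := mul_comm _ _
      linarith
    refine ⟨⟨h2, le_trans h1 hx.2⟩, h1, ?_⟩
    -- contraction
    have hca : f' a ≤ f' c := hmono a ha c hc hc.1
    have hxb : f' x ≤ f' b := hmono x hxab b hb hx.2
    have hdivle : f' a / f' b ≤ f' c / f' x :=
      div_le_div₀ (hpos c hc).le hca (hpos x hxab) hxb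
    have hdivstep : f' c / f' x * (x - c) ≤ f x / f' x := by
      rw [div_mul_eq_mul_div]
      gcongr
    calc (x - f x / f' x) - c = (x - c) - f x / f' x := by ring
      _ ≤ (x - c) - f' c / f' x * (x - c) := by linarith
      _ = (1 - f' c / f' x) * (x - c) := by ring
      _ ≤ r * (x - c) := by
          apply mul_le_mul_of_nonneg_right _ hxc.le
          rw [hr]; linarith
  -- all iterates in [c,b]
  have hmem : ∀ m, y m ∈ Icc c b := by
    intro m
    induction m with
    | zero => exact hy0
    | succ n ih => rw [hrec n]; exact (step (y n) ih).1
  have hanti : Antitone y := by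
    apply antitone_nat_of_succ_le
    intro n
    rw [hrec n]
    exact (step (y n) (hmem n)).2.1
  have hbound : ∀ m, y m - c ≤ (b - a) * r ^ m := by
    intro m
    induction m with
    | zero =>
      simp only [pow_zero, mul_one]
      have := (hy0).2
      have := hc.1
      linarith
    | succ n ih =>
      rw [hrec n, pow_succ]
      calc (y n - f (y n) / f' (y n)) - c ≤ r * (y n - c) := (step (y n) (hmem n)).2.2
        _ ≤ r * ((b - a) * r ^ n) := mul_le_mul_of_nonneg_left ih hr0
        _ = (b - a) * (r ^ n * r) := by ring
  refine ⟨hmem, hanti, ?_, hbound⟩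
  -- convergence by squeeze
  have htend : Tendsto (fun m : ℕ => c + (b - a) * r ^ m) atTop (nhds c) := by
    have : Tendsto (fun m : ℕ => r ^ m) atTop (nhds 0) :=
      tendsto_pow_atTop_nhds_zero_of_lt_one hr0 hr1
    have := ((this.const_mul (b - a)).const_add c)
    simpa using this
  refine tendsto_of_tendsto_of_tendsto_of_le_of_le tendsto_const_nhds htend
    (fun m => (hmem m).1) (fun m => ?_)
  have := hbound m
  linarith
end

section
/- Let α ∈ ℂ with 0 < Re(α) < 1, n ≥ 3, and j odd with 3 ≤ j ≤ n. Set θ = (j-1)π/n and define the vector v ∈ ℂⁿ by v_k = sin(kθ) - (1 - conj(α))·sin((k-1)θ) + conj(α)·sin((n-k)θ) for 1 ≤ k ≤ n. Then ‖v‖₂² = |1-α|²·(n/2)·g(θ), where g(θ) = 2 - 2cos(θ). -/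
/-!
Since `j - 1 = 2l` is even, `nθ = 2lπ`, so `sin ((n - k)θ) = -sin (kθ)` and the entries collapse to
`v_k = (1 - conj α) (sin (kθ) - sin ((k - 1)θ))`. Expanding the square leaves the constant
`1 - cos θ` plus cosines `cos (2kθ + b)`, which sum to zero over `k < n` because `sin (nθ) = 0`
while `sin θ ≠ 0` (as `0 < θ < π`).
-/

open Real Finset ComplexConjugate

lemma sum_Icc_one_eq_sum_range_succ {M : Type*} [AddCommMonoid M] (f : ℕ → M) (n : ℕ) :
    ∑ k ∈ Icc 1 n, f k = ∑ i ∈ range n, f (i + 1) := by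
  rw [range_eq_Ico, sum_Ico_add' f, ← Ico_add_one_right_eq_Icc]

namespace Real

lemma sin_two_mul_mul_pi_div_ne_zero {l n : ℕ} (hl : 0 < l) (hln : 2 * l < n) :
    sin (2 * l * π / n) ≠ 0 := by
  have hn : (0 : ℝ) < n := by exact_mod_cast (by omega : 0 < n)
  have hl' : (0 : ℝ) < l := by exact_mod_cast hl
  have hln' : (2 * l : ℝ) < n := by exact_mod_cast hln
  refine (sin_pos_of_pos_of_lt_pi (by positivity) ?_).ne'
  rw [div_lt_iff₀ hn]
  nlinarith [pi_pos]

lemma sum_range_cos_two_mul_add_eq_zero {θ : ℝ} {n : ℕ} (hθ : sin θ ≠ 0)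
    (hnθ : sin (n * θ) = 0) (b : ℝ) : ∑ i ∈ range n, cos (2 * θ * i + b) = 0 := by
  have h := sin_mul_sum_cos n (2 * θ) b
  rw [show (n : ℝ) * (2 * θ) / 2 = n * θ by ring, hnθ, zero_mul,
    mul_div_cancel_left₀ θ two_ne_zero] at h
  exact (mul_eq_zero.mp h).resolve_left hθ

lemma sq_sin_add_sub_sin (x θ : ℝ) :
    (sin (x + θ) - sin x) ^ 2
      = 1 - cos θ + cos (2 * x + θ) - cos (2 * x + 2 * θ) / 2 - cos (2 * x) / 2 := by
  simp only [sin_add, cos_add, sin_two_mul, cos_two_mul]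
  linear_combination (cos θ - 1) ^ 2 * sin_sq_add_cos_sq x + cos x ^ 2 * sin_sq_add_cos_sq θ

lemma sum_range_sq_sin_succ_mul_sub_sin_mul {θ : ℝ} {n : ℕ} (hθ : sin θ ≠ 0)
    (hnθ : sin (n * θ) = 0) :
    ∑ i ∈ range n, (sin ((i + 1) * θ) - sin (i * θ)) ^ 2 = n * (1 - cos θ) := by
  have hcos := sum_range_cos_two_mul_add_eq_zero hθ hnθ
  calc ∑ i ∈ range n, (sin ((i + 1) * θ) - sin (i * θ)) ^ 2
      = ∑ i ∈ range n, (1 - cos θ + cos (2 * θ * i + θ) - cos (2 * θ * i + 2 * θ) / 2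
          - cos (2 * θ * i + 0) / 2) := by
        refine sum_congr rfl fun i _ => ?_
        rw [add_mul, one_mul, sq_sin_add_sub_sin]
        ring_nf
    _ = n * (1 - cos θ) := by
        simp only [sum_sub_distrib, sum_add_distrib, ← sum_div, hcos, sum_const, card_range,
          nsmul_eq_mul]
        ring

end Real

lemma norm_sq_ofReal_sub_mul_add_conj_mul_neg (α : ℂ) (s t : ℝ) :
    ‖(s : ℂ) - (1 - conj α) * t + conj α * ((-s : ℝ) : ℂ)‖ ^ 2 = ‖1 - α‖ ^ 2 * (s - t) ^ 2 := by
  have h : (s : ℂ) - (1 - conj α) * t + conj α * ((-s : ℝ) : ℂ)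
      = conj (1 - α) * ((s - t : ℝ) : ℂ) := by
    push_cast
    rw [map_sub, map_one]
    ring
  rw [h, norm_mul, Complex.norm_conj, Complex.norm_real, norm_eq_abs, mul_pow, sq_abs]

theorem eigenvector_norm_odd_general (α : ℂ)
    (n : ℕ) (j : ℕ) (hj3 : 3 ≤ j) (hjn : j ≤ n) (hjo : Odd j)
    (θ : ℝ) (hθ : θ = (j - 1) * π / n)
    (v : ℕ → ℂ)
    (hv : ∀ k : ℕ, 1 ≤ k → k ≤ n →
      v k = (Real.sin (k * θ) : ℂ)
            - (1 - (starRingEnd ℂ) α) * (Real.sin ((k - 1 : ℝ) * θ) : ℂ)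
            + (starRingEnd ℂ) α * (Real.sin ((n - k : ℝ) * θ) : ℂ)) :
    ∑ k ∈ Finset.Icc 1 n, ‖v k‖ ^ 2
      = ‖1 - α‖ ^ 2 * (n / 2) * (2 - 2 * Real.cos θ) := by
  obtain ⟨l, rfl⟩ := hjo
  replace hθ : θ = 2 * l * π / n := by rw [hθ]; push_cast; ring
  have hsinθ : sin θ ≠ 0 := hθ ▸ sin_two_mul_mul_pi_div_ne_zero (by omega) (by omega)
  have hnθ : n * θ = l * (2 * π) := by
    have : (n : ℝ) ≠ 0 := by exact_mod_cast (by omega : n ≠ 0)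
    rw [hθ]
    field_simp
  have hsin_nθ : sin (n * θ) = 0 := by
    rw [hnθ, ← mul_assoc]
    exact_mod_cast sin_nat_mul_pi (l * 2)
  have hsin_antisymm (k : ℕ) : sin ((n - k : ℝ) * θ) = -sin (k * θ) := by
    rw [sub_mul, hnθ, sin_nat_mul_two_pi_sub]
  calc ∑ k ∈ Icc 1 n, ‖v k‖ ^ 2
      = ∑ k ∈ Icc 1 n, ‖1 - α‖ ^ 2 * (sin (k * θ) - sin ((k - 1 : ℝ) * θ)) ^ 2 := by
        refine sum_congr rfl fun k hk => ?_
        rw [mem_Icc] at hk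
        rw [hv k hk.1 hk.2, hsin_antisymm, norm_sq_ofReal_sub_mul_add_conj_mul_neg]
    _ = ‖1 - α‖ ^ 2 * (n * (1 - cos θ)) := by
        rw [← mul_sum, sum_Icc_one_eq_sum_range_succ,
          ← sum_range_sq_sin_succ_mul_sub_sin_mul hsinθ hsin_nθ]
        push_cast
        simp only [add_sub_cancel_right]
    _ = ‖1 - α‖ ^ 2 * (n / 2) * (2 - 2 * cos θ) := by ring

/-- Exact norm of the eigenvector for odd `j`: with `θ = (j-1)π/n`,
`‖v‖₂² = |1-α|²·(n/2)·g(θ)` where `g(θ) = 2 - 2 cos θ`. -/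
theorem eigenvector_norm_odd (α : ℂ) (hα0 : 0 < α.re) (hα1 : α.re < 1)
    (n : ℕ) (hn : 3 ≤ n) (j : ℕ) (hj3 : 3 ≤ j) (hjn : j ≤ n) (hjo : Odd j)
    (θ : ℝ) (hθ : θ = (j - 1) * π / n)
    (v : ℕ → ℂ)
    (hv : ∀ k : ℕ, 1 ≤ k → k ≤ n →
      v k = (Real.sin (k * θ) : ℂ)
            - (1 - (starRingEnd ℂ) α) * (Real.sin ((k - 1 : ℝ) * θ) : ℂ)
            + (starRingEnd ℂ) α * (Real.sin ((n - k : ℝ) * θ) : ℂ)) :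
    ∑ k ∈ Finset.Icc 1 n, ‖v k‖ ^ 2
      = ‖1 - α‖ ^ 2 * (n / 2) * (2 - 2 * Real.cos θ) :=
  eigenvector_norm_odd_general α n j hj3 hjn hjo θ hθ v hv
end
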